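/- The zeroth differential Hochschild cohomology of C^∞(ℝ^n,ℂ) with values in W is isomorphic, as a ℂ[[λ]]-module, to C^∞(ℝ^n,ℂ)[[λ]]; that is, the set of a ∈ W satisfying π*(f) ⋆_W a = a ⋆_W π*(f) for all f ∈ C^∞(ℝ^n,ℂ) is isomorphic to C^∞(ℝ^n,ℂ)[[λ]]. -/

import Mathlib

set_option synthInstance.maxHeartbeats 1000000
set_option maxHeartbeats 1000000

open scoped BigOperators

noncomputable section

/-- The subalgebra of smooth complex-valued functions on `ℝⁿ`. -/
def smoothSubalgebra (n : ℕ) : Subalgebra ℂ ((Fin n → ℝ) → ℂ) where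
  carrier := {f | ContDiff ℝ (⊤ : ℕ∞) f}
  mul_mem' hf hg := by simp only [Set.mem_setOf_eq] at *; exact hf.mul hg
  add_mem' hf hg := by simp only [Set.mem_setOf_eq] at *; exact hf.add hg
  algebraMap_mem' c := by
    show ContDiff ℝ (⊤ : ℕ∞) (fun _ => c)
    exact contDiff_const

/-- `C^∞(ℝⁿ, ℂ)` as a commutative `ℂ`-algebra. -/
abbrev Cinf (n : ℕ) : Type := smoothSubalgebra n

theorem Cinf.smooth {n : ℕ} (f : Cinf n) : ContDiff ℝ (⊤ : ℕ∞) f.1 := f.2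

/-- Complex conjugation as the `*`-involution on `C^∞(ℝⁿ, ℂ)`. -/
instance (n : ℕ) : StarRing (Cinf n) where
  star f := ⟨fun x => (starRingEnd ℂ) (f.1 x), by
    exact Complex.conjCLE.toContinuousLinearMap.contDiff.comp f.smooth⟩
  star_involutive f := Subtype.ext (funext fun x => by simp)
  star_mul f g := Subtype.ext (funext fun x => by
    simp only [MulMemClass.coe_mul, Pi.mul_apply, map_mul]; ring)
  star_add f g := Subtype.ext (funext fun x => by
    simp only [AddMemClass.coe_add, Pi.add_apply, map_add])

/-- The partial derivative `∂/∂qᵏ` on smooth functions. -/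
def pderivQ {n : ℕ} (k : Fin n) (f : Cinf n) : Cinf n :=
  ⟨fun x => fderiv ℝ f.1 x (Pi.single k 1), by
    exact (f.smooth.fderiv_right (m := (⊤ : ℕ∞)) (by norm_cast)).clm_apply contDiff_const⟩

/-- `W₀ = C^∞(ℝⁿ,ℂ)[[p₁,…,pₙ]]`. -/
abbrev W0 (n : ℕ) : Type := MvPowerSeries (Fin n) (Cinf n)

/-- `W = W₀[[λ]]`. -/
abbrev Wf (n : ℕ) : Type := PowerSeries (W0 n)

/-- `∂/∂qᵏ` on `W₀`, acting on the smooth coefficients. -/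
def Dq {n : ℕ} (k : Fin n) (a : W0 n) : W0 n := fun m => pderivQ k (a m)

/-- The formal partial derivative `∂/∂pₖ` on `W₀`. -/
def Dp {n : ℕ} (k : Fin n) (a : W0 n) : W0 n :=
  fun m => (m k + 1 : ℕ) • a (m + Finsupp.single k 1)

/-- The natural inclusion `π* : C^∞(ℝⁿ) → W₀`. -/
def piW0 {n : ℕ} (f : Cinf n) : W0 n := MvPowerSeries.C (σ := Fin n) (R := Cinf n) f

/-- The natural inclusion `π* : C^∞(ℝⁿ) → W`. -/
def piW {n : ℕ} (f : Cinf n) : Wf n := PowerSeries.C (R := W0 n) (piW0 f)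

/-- One factor of the bidifferential operator
`P = Σₖ (∂_{qᵏ} ⊗ ∂_{pₖ} − ∂_{pₖ} ⊗ ∂_{qᵏ})`: the derivative hitting the first
tensor factor (`true` records the summand `∂_{qᵏ} ⊗ ∂_{pₖ}`). -/
def fstDeriv {n : ℕ} : Fin n × Bool → W0 n → W0 n
  | (k, true) => Dq k
  | (k, false) => Dp k

/-- The derivative hitting the second tensor factor. -/
def sndDeriv {n : ℕ} : Fin n × Bool → W0 n → W0 n
  | (k, true) => Dp k
  | (k, false) => Dq k

/-- The sign of each summand of `P`. -/
def pSign {n : ℕ} : Fin n × Bool → ℂ := fun kb => if kb.2 then 1 else -1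

/-- Iterated application of the first-factor derivatives along a sequence `t`. -/
def iterFst {n r : ℕ} (t : Fin r → Fin n × Bool) (a : W0 n) : W0 n :=
  (List.ofFn t).foldr (fun kb x => fstDeriv kb x) a

/-- Iterated application of the second-factor derivatives along a sequence `t`. -/
def iterSnd {n r : ℕ} (t : Fin r → Fin n × Bool) (a : W0 n) : W0 n :=
  (List.ofFn t).foldr (fun kb x => sndDeriv kb x) a

/-- `μ ∘ Pʳ (a ⊗ b)`: the `r`-th power of the Poisson bidifferential operator
`P = Σₖ (∂_{qᵏ} ⊗ ∂_{pₖ} − ∂_{pₖ} ⊗ ∂_{qᵏ})` followed by the (undeformed)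
multiplication `μ`. -/
def moyalP {n : ℕ} (r : ℕ) (a b : W0 n) : W0 n :=
  ∑ t : Fin r → Fin n × Bool,
    (∏ j, pSign (t j)) • (iterFst t a * iterSnd t b)

/-- The formal Weyl–Moyal star product
`a ⋆_W b = μ ∘ exp((iλ/2) Σₖ (∂_{qᵏ} ⊗ ∂_{pₖ} − ∂_{pₖ} ⊗ ∂_{qᵏ}))(a ⊗ b)`
on `W = W₀[[λ]]`. -/
def weylMul {n : ℕ} (a b : Wf n) : Wf n :=
  PowerSeries.mk fun ℓ => ∑ p ∈ Finset.HasAntidiagonal.antidiagonal ℓ, ∑ q ∈ Finset.HasAntidiagonal.antidiagonal p.2,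
    ((Complex.I / 2) ^ p.1 / (p.1.factorial : ℂ)) •
      moyalP p.1 (PowerSeries.coeff (R := (W0 n)) q.1 a) (PowerSeries.coeff (R := (W0 n)) q.2 b)

/-- Complex conjugation on `W₀` (the formal variables `p` are treated as real). -/
def starW0 {n : ℕ} (a : W0 n) : W0 n := fun m => star (a m)

/-- Complex conjugation on `W = W₀[[λ]]` (`λ` and the `p`'s are treated as real). -/
def starWf {n : ℕ} (w : Wf n) : Wf n :=
  PowerSeries.mk fun ℓ => starW0 (PowerSeries.coeff (R := (W0 n)) ℓ w)

/-- The classical limit `cl : W → W₀`, setting `λ = 0`. -/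
def clW {n : ℕ} (w : Wf n) : W0 n := PowerSeries.coeff (R := (W0 n)) 0 w

/-- The action of a formal series `c ∈ ℂ[[λ]]` on `W`, making `W` a
`ℂ[[λ]]`-module (the element `c(λ)·1` is central, so deformed and undeformed
multiplication by it agree). -/
def lamSmulW {n : ℕ} (c : PowerSeries ℂ) (w : Wf n) : Wf n :=
  PowerSeries.map (algebraMap ℂ (W0 n)) c * w

/-- The action of `c ∈ ℂ[[λ]]` on `C^∞(ℝⁿ)[[λ]]`. -/
def lamSmulS {n : ℕ} (c : PowerSeries ℂ) (g : PowerSeries (Cinf n)) : PowerSeries (Cinf n) :=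
  PowerSeries.map (algebraMap ℂ (Cinf n)) c * g

end
/-! ### Generic algebraic notions: differential operators, Hochschild cochains,
formal deformations and positive functionals. -/

/-- Grothendieck's algebraic notion of a differential operator of order at most `k`
from a commutative ring `A` to a module `M`, with the action of `A` on `M` given
explicitly by `sm`.  An operator of order `≤ 0` is a module map, and `D` has order
`≤ k+1` if all the commutators `[D, a]` have order `≤ k`. -/
def IsDiffOpLE {A : Type*} [CommRing A] {M : Type*} [AddCommGroup M]
    (sm : A → M → M) : ℕ → (A → M) → Prop
  | 0 => fun D => ∀ a x, D (a * x) = sm a (D x)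
  | (k+1) => fun D => ∀ a, IsDiffOpLE sm k fun x => D (a * x) - sm a (D x)

/-- `D : A → M` is a differential operator if it has some finite order. -/
def IsDiffOp {A : Type*} [CommRing A] {M : Type*} [AddCommGroup M]
    (sm : A → M → M) (D : A → M) : Prop :=
  ∃ k, IsDiffOpLE sm k D

/-- The tuple obtained from `f : Fin (k+1) → A` by multiplying the `i`-th and the
`(i+1)`-st entries. -/
def mergeAt {A : Type*} [Mul A] {k : ℕ} (f : Fin (k + 1) → A) (i : Fin k) : Fin k → A :=
  fun j =>
    if (j : ℕ) < (i : ℕ) then f j.castSucc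
    else if (j : ℕ) = (i : ℕ) then f i.castSucc * f i.succ
    else f j.succ

/-- The Hochschild coboundary operator on `k`-cochains of a commutative ring `A` with
values in an `(A,A)`-bimodule `M`, whose left and right actions are given explicitly by
`L` and `R`:
`(δφ)(f₀,…,f_k) = f₀·φ(f₁,…,f_k) + Σᵢ (−1)^{i+1} φ(f₀,…,fᵢfᵢ₊₁,…,f_k) + (−1)^{k+1} φ(f₀,…,f_{k−1})·f_k`. -/
def hDelta {A : Type*} [CommRing A] {M : Type*} [AddCommGroup M]
    (L : A → M → M) (R : M → A → M) {k : ℕ} (φ : (Fin k → A) → M) :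
    (Fin (k + 1) → A) → M := fun f =>
  L (f 0) (φ fun i => f i.succ)
    + ∑ i : Fin k, (-1 : ℤ) ^ ((i : ℕ) + 1) • φ (mergeAt f i)
    + (-1 : ℤ) ^ (k + 1) • R (φ fun i => f i.castSucc) (f (Fin.last k))

/-- A `k`-multilinear cochain (over `ℂ`). -/
def IsMultilinC {A : Type*} [CommRing A] [Algebra ℂ A] {M : Type*} [AddCommGroup M]
    [Module ℂ M] {k : ℕ} (φ : (Fin k → A) → M) : Prop :=
  (∀ (f : Fin k → A) (i : Fin k) (x y : A),
      φ (Function.update f i (x + y)) = φ (Function.update f i x) + φ (Function.update f i y)) ∧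
  (∀ (f : Fin k → A) (i : Fin k) (c : ℂ) (x : A),
      φ (Function.update f i (c • x)) = c • φ (Function.update f i x))

/-- The total antisymmetrization operator on `k`-cochains. -/
noncomputable def altC {A : Type*} {M : Type*} [AddCommGroup M] [Module ℂ M] {k : ℕ}
    (φ : (Fin k → A) → M) : (Fin k → A) → M := fun f =>
  (k.factorial : ℂ)⁻¹ • ∑ σ : Equiv.Perm (Fin k), ((Equiv.Perm.sign σ : ℤ)) • φ (f ∘ σ)

/-- The formal deformation `F ⋆ G = Σₙ λⁿ Σ_{r+i+j=n} C_r(F_i, G_j)` of an algebra `A`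
determined by a family of "cochains" `C_r : A × A → A`, where `C_0` is meant to be the
undeformed product.  This is the general form of a star product. -/
noncomputable def starMulC {A : Type*} [Ring A] (C : ℕ → A → A → A) (F G : PowerSeries A) :
    PowerSeries A :=
  PowerSeries.mk fun ℓ => ∑ p ∈ Finset.HasAntidiagonal.antidiagonal ℓ, ∑ q ∈ Finset.HasAntidiagonal.antidiagonal p.2,
    C p.1 (PowerSeries.coeff (R := A) q.1 F) (PowerSeries.coeff (R := A) q.2 G)

/-- The coefficientwise involution on `A[[λ]]` (the formal parameter `λ` is real). -/
noncomputable def starSeries {A : Type*} [Semiring A] [Star A] (F : PowerSeries A) :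
    PowerSeries A :=
  PowerSeries.mk fun ℓ => star (PowerSeries.coeff (R := A) ℓ F)

/-- `C` is a (bidifferential) star product on the commutative `ℂ`-algebra `A`:
`C_0` is the pointwise product, each `C_r` is `ℂ`-bilinear and a differential operator
in each argument, and the total product on `A[[λ]]` is associative. -/
structure IsStarProduct (A : Type*) [CommRing A] [Algebra ℂ A] (C : ℕ → A → A → A) :
    Prop where
  C_zero : ∀ f g, C 0 f g = f * g
  add_left : ∀ r f f' g, C r (f + f') g = C r f g + C r f' g
  add_right : ∀ r f g g', C r f (g + g') = C r f g + C r f g'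
  smul_left : ∀ (r : ℕ) (c : ℂ) f g, C r (c • f) g = c • C r f g
  smul_right : ∀ (r : ℕ) (c : ℂ) f g, C r f (c • g) = c • C r f g
  diff_left : ∀ r g, IsDiffOp (· * ·) fun f => C r f g
  diff_right : ∀ r f, IsDiffOp (· * ·) fun g => C r f g
  assoc : ∀ F G H, starMulC C (starMulC C F G) H = starMulC C F (starMulC C G H)

/-- `P` is a Poisson bracket on the commutative `ℂ`-algebra `A`. -/
structure IsPoissonBracket (A : Type*) [CommRing A] [Algebra ℂ A] (P : A → A → A) :
    Prop where
  antisymm : ∀ f g, P f g = - P g f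
  add_left : ∀ f f' g, P (f + f') g = P f g + P f' g
  smul_left : ∀ (c : ℂ) f g, P (c • f) g = c • P f g
  leibniz : ∀ f g h, P f (g * h) = P f g * h + g * P f h
  jacobi : ∀ f g h, P f (P g h) + P g (P h f) + P h (P f g) = 0

/-- The star product `C` quantizes the Poisson bracket `P`:
`C₁(f,g) − C₁(g,f) = i {f, g}`. -/
def QuantizesPB {A : Type*} [CommRing A] [Algebra ℂ A] (C : ℕ → A → A → A)
    (P : A → A → A) : Prop :=
  ∀ f g, C 1 f g - C 1 g f = Complex.I • P f g

/-- The star product `C` is Hermitian: `conj (F ⋆ G) = (conj G) ⋆ (conj F)`. -/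
def IsHermitianSP {A : Type*} [Ring A] [Star A] (C : ℕ → A → A → A) : Prop :=
  ∀ F G, starSeries (starMulC C F G) = starMulC C (starSeries G) (starSeries F)

/-- The `ℂ[[λ]]`-linear functional `ω = Σᵣ λʳ ωᵣ : A[[λ]] → ℂ[[λ]]` determined by a
family of `ℂ`-linear functionals `ωᵣ : A → ℂ`. -/
noncomputable def extFun {A : Type*} [Ring A] [Module ℂ A] (ω : ℕ → A →ₗ[ℂ] ℂ)
    (F : PowerSeries A) : PowerSeries ℂ :=
  PowerSeries.mk fun ℓ => ∑ q ∈ Finset.HasAntidiagonal.antidiagonal ℓ, ω q.1 (PowerSeries.coeff (R := A) q.2 F)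

/-- `s ≥ 0` in `ℝ[[λ]] ⊂ ℂ[[λ]]`: all coefficients of `s` are real and `s` is either zero
or its lowest non-vanishing coefficient is positive.  This is the ring ordering of
`ℝ[[λ]]` in which `λ` is positive and infinitesimally small. -/
def IsNonnegSeries (s : PowerSeries ℂ) : Prop :=
  (∀ m, (PowerSeries.coeff (R := ℂ) m s).im = 0) ∧
    (s = 0 ∨ ∃ N, (∀ m, m < N → PowerSeries.coeff (R := ℂ) m s = 0) ∧ 0 < (PowerSeries.coeff (R := ℂ) N s).re)

/-- The entrywise extension of a family `C_r` of cochains on `A` to matrices,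
`(C_r(X,Y))_{ij} = Σ_l C_r(X_{il}, Y_{lj})`. -/
noncomputable def matC {A : Type*} [Ring A] (N : ℕ) (C : ℕ → A → A → A) :
    ℕ → Matrix (Fin N) (Fin N) A → Matrix (Fin N) (Fin N) A → Matrix (Fin N) (Fin N) A :=
  fun r X Y i j => ∑ l, C r (X i l) (Y l j)
/-! ### The bimodule structures on `W` and `W₀`, the degree map, and related notions. -/

/-- Left action of `C^∞(ℝⁿ)` on `W` by `⋆_W`-multiplication with `π*(f)`. -/
noncomputable def Lw {n : ℕ} (f : Cinf n) (w : Wf n) : Wf n := weylMul (piW f) w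

/-- Right action of `C^∞(ℝⁿ)` on `W` by `⋆_W`-multiplication with `π*(f)`. -/
noncomputable def Rw {n : ℕ} (w : Wf n) (f : Cinf n) : Wf n := weylMul w (piW f)

/-- The pointwise (undeformed) action of `C^∞(ℝⁿ)` on `W`. -/
noncomputable def ptSmulW {n : ℕ} (f : Cinf n) (w : Wf n) : Wf n := piW f * w

/-- The pointwise left action of `C^∞(ℝⁿ)` on `W₀`. -/
noncomputable def L0 {n : ℕ} (f : Cinf n) (b : W0 n) : W0 n := piW0 f * b

/-- The pointwise right action of `C^∞(ℝⁿ)` on `W₀`. -/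
noncomputable def R0 {n : ℕ} (b : W0 n) (f : Cinf n) : W0 n := b * piW0 f

/-- A `W`-valued cochain is differential if it is a differential operator in each
argument. -/
def IsDiffCochainW {n k : ℕ} (φ : (Fin k → Cinf n) → Wf n) : Prop :=
  ∀ (f : Fin k → Cinf n) (i : Fin k), IsDiffOp ptSmulW fun x => φ (Function.update f i x)

/-- A `W₀`-valued cochain is differential if it is a differential operator in each
argument. -/
def IsDiffCochain0 {n k : ℕ} (φ : (Fin k → Cinf n) → W0 n) : Prop :=
  ∀ (f : Fin k → Cinf n) (i : Fin k), IsDiffOp L0 fun x => φ (Function.update f i x)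

/-- The involution `φ ↦ φ*` on `W`-valued Hochschild cochains,
`φ*(f₁,…,f_r) = conj (φ (conj f_r, …, conj f₁))`. -/
noncomputable def cochainStar {n r : ℕ} (φ : (Fin r → Cinf n) → Wf n) :
    (Fin r → Cinf n) → Wf n := fun f =>
  starWf (φ fun i => star (f i.rev))

/-- The Euler operator `Σᵢ pᵢ ∂/∂pᵢ` on `W₀`. -/
noncomputable def pEuler {n : ℕ} (b : W0 n) : W0 n :=
  ∑ i : Fin n, MvPowerSeries.X i * Dp i b

/-- The degree map `deg = Σᵢ pᵢ ∂/∂pᵢ + λ ∂/∂λ` on `W`. -/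
noncomputable def degW {n : ℕ} (w : Wf n) : Wf n :=
  PowerSeries.mk fun ℓ =>
    ℓ • PowerSeries.coeff (R := (W0 n)) ℓ w + pEuler (PowerSeries.coeff (R := (W0 n)) ℓ w)

/-- `w ∈ W` is homogeneous of degree `k` with respect to `deg`. -/
def IsDegHomogElem {n : ℕ} (k : ℕ) (w : Wf n) : Prop := degW w = k • w

/-- A map `τ : C^∞(ℝⁿ) → W` is homogeneous of degree `k` with respect to `deg`. -/
def IsDegHomog {n : ℕ} (k : ℕ) (τ : Cinf n → Wf n) : Prop :=
  ∀ f, degW (τ f) = k • τ f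

/-- `τ : C^∞(ℝⁿ) → W` is an element of `HC¹(C^∞(ℝⁿ), W)`: it is `ℂ`-linear and a
differential operator. -/
def IsHC1 {n : ℕ} (τ : Cinf n → Wf n) : Prop :=
  (∀ f g, τ (f + g) = τ f + τ g) ∧ (∀ (c : ℂ) (f : Cinf n), τ (c • f) = c • τ f) ∧
    IsDiffOp ptSmulW τ

/-- `w ∈ W` lies in the part of `deg`-degree at least `N` (all components of total
degree `< N` in the `pᵢ` and `λ` vanish).  Used to express convergence of the series
`Σₖ τₖ` in the `deg`-adic topology. -/
def degOrderGE {n : ℕ} (N : ℕ) (w : Wf n) : Prop :=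
  ∀ (ℓ : ℕ) (m : Fin n →₀ ℕ),
    (m.sum fun _ e => e) + ℓ < N → PowerSeries.coeff (R := (W0 n)) ℓ w m = 0

/-- The component of `w ∈ W` of `deg`-degree exactly `d`. -/
noncomputable def degComp {n : ℕ} (d : ℕ) (w : Wf n) : Wf n :=
  PowerSeries.mk fun ℓ =>
    (fun m => if (m.sum fun _ e => e) + ℓ = d then PowerSeries.coeff (R := (W0 n)) ℓ w m else 0 :
      W0 n)

/-- The `λ`-linear extension of the finite sum `τ₀ + ⋯ + τ_{k−1}` to a map
`C^∞(ℝⁿ)[[λ]] → W`. -/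
noncomputable def extSum {n : ℕ} (τ : ℕ → Cinf n → Wf n) (k : ℕ)
    (F : PowerSeries (Cinf n)) : Wf n :=
  PowerSeries.mk fun ℓ => ∑ q ∈ Finset.HasAntidiagonal.antidiagonal ℓ, ∑ i ∈ Finset.range k,
    PowerSeries.coeff (R := (W0 n)) q.1 (τ i (PowerSeries.coeff (R := (Cinf n)) q.2 F))

/-- The `λ`-linear (that is, `ℂ[[λ]]`-linear) extension
`π* : C^∞(ℝⁿ)[[λ]] → W` of the natural inclusion. -/
noncomputable def piHat {n : ℕ} (F : PowerSeries (Cinf n)) : Wf n :=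
  PowerSeries.map (MvPowerSeries.C (σ := Fin n) (R := Cinf n)) F

/-- The canonical Poisson bracket `{a,b} = Σₖ (∂a/∂qᵏ ∂b/∂pₖ − ∂a/∂pₖ ∂b/∂qᵏ)` on the
formal cotangent bundle, i.e. on `W₀`. -/
noncomputable def pbCan {n : ℕ} (a b : W0 n) : W0 n :=
  ∑ k : Fin n, (Dq k a * Dp k b - Dp k a * Dq k b)

/-!
An element `a = Σ λ^ℓ a_ℓ` of `W` commutes with every `π*(f)` exactly when no `a_ℓ` depends
on `p`. If the `a_ℓ` are `p`-independent, every term of order `r ≥ 1` of the Moyal product of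
`π*(f)` with `a_ℓ` applies some `∂_{pₖ}` to one of the two `p`-independent factors, so only the
commutative product survives. Conversely, for `f = qᵏ` all terms of order `≥ 2` vanish, and the
`λ^{ℓ+1}`-coefficient of `π*(qᵏ) ⋆ a − a ⋆ π*(qᵏ)` is `i ∂_{pₖ} a_ℓ`. So the commutant is the
image of the `ℂ[[λ]]`-linear embedding `C^∞(ℝⁿ)[[λ]] → W`, inverted by the constant term in `p`.
-/

namespace List

variable {ι M : Type*} (D : ι → M → M)

theorem foldr_mem_of_forall_mem {S : Set M} (hD : ∀ i, ∀ x ∈ S, D i x ∈ S) {x : M} (hx : x ∈ S) :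
    ∀ l : List ι, l.foldr D x ∈ S
  | [] => hx
  | i :: l => hD i _ (foldr_mem_of_forall_mem hD hx l)

theorem foldr_eq_zero_of_two_le_length [Zero M] (h0 : ∀ i, D i 0 = 0) {x : M}
    (hx : ∀ i j, D i (D j x) = 0) : ∀ l : List ι, 2 ≤ l.length → l.foldr D x = 0
  | [i, j], _ => hx i j
  | i :: j :: k :: l, _ => by
    rw [foldr_cons, foldr_eq_zero_of_two_le_length h0 hx (j :: k :: l) (by simp), h0]

end List

variable {n : ℕ}

theorem pderivQ_algebraMap (k : Fin n) (c : ℂ) : pderivQ k (algebraMap ℂ (Cinf n) c) = 0 := by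
  apply Subtype.ext
  funext x
  show fderiv ℝ (fun _ => c) x (Pi.single k 1) = 0
  simp

theorem pderivQ_zero (k : Fin n) : pderivQ k (0 : Cinf n) = 0 := by
  simpa using pderivQ_algebraMap k 0

noncomputable def coordQ (k : Fin n) : Cinf n :=
  ⟨Complex.ofRealCLM.comp (ContinuousLinearMap.proj (R := ℝ) k),
    ContinuousLinearMap.contDiff (n := (⊤ : ℕ∞)) _⟩

theorem pderivQ_coordQ (j k : Fin n) :
    pderivQ j (coordQ k) = algebraMap ℂ (Cinf n) (if k = j then 1 else 0) := by
  apply Subtype.ext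
  funext x
  show fderiv ℝ (Complex.ofRealCLM.comp (ContinuousLinearMap.proj (R := ℝ) k)) x (Pi.single j 1) = _
  rw [ContinuousLinearMap.fderiv]
  by_cases h : k = j
  · subst h; simp
  · simp [h]

theorem piW0_apply (f : Cinf n) (m : Fin n →₀ ℕ) : piW0 f m = if m = 0 then f else 0 :=
  MvPowerSeries.coeff_C m f

theorem piW0_apply_of_ne_zero (f : Cinf n) {m : Fin n →₀ ℕ} (hm : m ≠ 0) : piW0 f m = 0 := by
  rw [piW0_apply, if_neg hm]

theorem Dq_piW0 (k : Fin n) (f : Cinf n) : Dq k (piW0 f) = piW0 (pderivQ k f) := by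
  funext m
  show pderivQ k (piW0 f m) = piW0 (pderivQ k f) m
  by_cases hm : m = 0
  · rw [hm, piW0_apply, piW0_apply, if_pos rfl, if_pos rfl]
  · rw [piW0_apply_of_ne_zero _ hm, piW0_apply_of_ne_zero _ hm, pderivQ_zero]

theorem Dp_piW0 (k : Fin n) (f : Cinf n) : Dp k (piW0 f) = 0 := by
  funext m
  show (m k + 1 : ℕ) • piW0 f (m + Finsupp.single k 1) = 0
  rw [piW0_apply_of_ne_zero _ (by simp), smul_zero]

theorem eq_piW0_constantCoeff_of_Dp_eq_zero {b : W0 n} (h : ∀ k, Dp k b = 0) :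
    b = piW0 (MvPowerSeries.constantCoeff b) := by
  funext m
  by_cases hm : m = 0
  · rw [hm, piW0_apply, if_pos rfl]
    rfl
  obtain ⟨k, hk⟩ := Finsupp.ne_iff.mp hm
  obtain ⟨m', rfl⟩ : ∃ m', m = m' + Finsupp.single k 1 :=
    ⟨m - Finsupp.single k 1, (tsub_add_cancel_of_le (Finsupp.single_le_iff.mpr
      (Nat.one_le_iff_ne_zero.mpr hk))).symm⟩
  have hDp : (m' k + 1 : ℕ) • b (m' + Finsupp.single k 1) = 0 := congrFun (h k) m'
  rw [← Nat.cast_smul_eq_nsmul ℂ] at hDp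
  rw [piW0_apply_of_ne_zero _ hm]
  exact (smul_eq_zero.mp hDp).resolve_left (Nat.cast_ne_zero.mpr (Nat.succ_ne_zero _))

def IsPartialDeriv (D : W0 n → W0 n) : Prop := ∃ k, D = Dq k ∨ D = Dp k

namespace IsPartialDeriv

variable {D : W0 n → W0 n}

theorem piW0_mem_range (hD : IsPartialDeriv D) (f : Cinf n) : D (piW0 f) ∈ Set.range piW0 := by
  obtain ⟨k, rfl | rfl⟩ := hD
  · exact ⟨_, (Dq_piW0 k f).symm⟩
  · exact ⟨0, by rw [Dp_piW0, piW0, map_zero]⟩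

theorem map_zero (hD : IsPartialDeriv D) : D 0 = 0 := by
  obtain ⟨k, rfl | rfl⟩ := hD
  · funext m
    exact pderivQ_zero k
  · funext m
    exact smul_zero _

theorem apply_piW0_algebraMap (hD : IsPartialDeriv D) (c : ℂ) :
    D (piW0 (algebraMap ℂ (Cinf n) c)) = 0 := by
  obtain ⟨k, rfl | rfl⟩ := hD
  · rw [Dq_piW0, pderivQ_algebraMap, piW0, _root_.map_zero]
  · exact Dp_piW0 k _

theorem apply_piW0_coordQ (hD : IsPartialDeriv D) (k : Fin n) :
    ∃ c : ℂ, D (piW0 (coordQ k)) = piW0 (algebraMap ℂ (Cinf n) c) := by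
  obtain ⟨j, rfl | rfl⟩ := hD
  · exact ⟨_, by rw [Dq_piW0, pderivQ_coordQ]⟩
  · exact ⟨0, by rw [Dp_piW0, _root_.map_zero, piW0, _root_.map_zero]⟩

theorem apply_apply_piW0_coordQ {D' : W0 n → W0 n} (hD : IsPartialDeriv D)
    (hD' : IsPartialDeriv D') (k : Fin n) : D (D' (piW0 (coordQ k))) = 0 := by
  obtain ⟨c, hc⟩ := hD'.apply_piW0_coordQ k
  rw [hc, hD.apply_piW0_algebraMap]

end IsPartialDeriv

theorem isPartialDeriv_fstDeriv (kb : Fin n × Bool) : IsPartialDeriv (fstDeriv kb) := by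
  obtain ⟨k, _ | _⟩ := kb
  exacts [⟨k, .inr rfl⟩, ⟨k, .inl rfl⟩]

theorem isPartialDeriv_sndDeriv (kb : Fin n × Bool) : IsPartialDeriv (sndDeriv kb) := by
  obtain ⟨k, _ | _⟩ := kb
  exacts [⟨k, .inl rfl⟩, ⟨k, .inr rfl⟩]

theorem fstDeriv_eq_Dp_or_sndDeriv_eq_Dp (kb : Fin n × Bool) :
    fstDeriv kb = Dp kb.1 ∨ sndDeriv kb = Dp kb.1 := by
  obtain ⟨k, _ | _⟩ := kb
  exacts [.inl rfl, .inr rfl]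

section iterDeriv

variable {r : ℕ}

theorem iterFst_zero (t : Fin r → Fin n × Bool) : iterFst t (0 : W0 n) = 0 :=
  List.foldr_mem_of_forall_mem (S := {0}) _
    (by rintro kb _ rfl; exact (isPartialDeriv_fstDeriv kb).map_zero) rfl _

theorem iterSnd_zero (t : Fin r → Fin n × Bool) : iterSnd t (0 : W0 n) = 0 :=
  List.foldr_mem_of_forall_mem (S := {0}) _
    (by rintro kb _ rfl; exact (isPartialDeriv_sndDeriv kb).map_zero) rfl _

theorem iterFst_piW0_mem_range (t : Fin r → Fin n × Bool) (f : Cinf n) :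
    iterFst t (piW0 f) ∈ Set.range piW0 :=
  List.foldr_mem_of_forall_mem (S := Set.range piW0) _
    (by rintro kb _ ⟨g, rfl⟩; exact (isPartialDeriv_fstDeriv kb).piW0_mem_range g) ⟨f, rfl⟩ _

theorem iterSnd_piW0_mem_range (t : Fin r → Fin n × Bool) (f : Cinf n) :
    iterSnd t (piW0 f) ∈ Set.range piW0 :=
  List.foldr_mem_of_forall_mem (S := Set.range piW0) _
    (by rintro kb _ ⟨g, rfl⟩; exact (isPartialDeriv_sndDeriv kb).piW0_mem_range g) ⟨f, rfl⟩ _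

theorem iterFst_succ (t : Fin (r + 1) → Fin n × Bool) (a : W0 n) :
    iterFst t a = fstDeriv (t 0) (iterFst (Fin.tail t) a) := by
  rw [iterFst, List.ofFn_succ, List.foldr_cons]
  rfl

theorem iterSnd_succ (t : Fin (r + 1) → Fin n × Bool) (a : W0 n) :
    iterSnd t a = sndDeriv (t 0) (iterSnd (Fin.tail t) a) := by
  rw [iterSnd, List.ofFn_succ, List.foldr_cons]
  rfl

theorem iterFst_piW0_coordQ (hr : 2 ≤ r) (t : Fin r → Fin n × Bool) (k : Fin n) :
    iterFst t (piW0 (coordQ k)) = 0 :=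
  List.foldr_eq_zero_of_two_le_length _ (fun kb => (isPartialDeriv_fstDeriv kb).map_zero)
    (fun i j => (isPartialDeriv_fstDeriv i).apply_apply_piW0_coordQ (isPartialDeriv_fstDeriv j) k)
    _ (by simpa using hr)

theorem iterSnd_piW0_coordQ (hr : 2 ≤ r) (t : Fin r → Fin n × Bool) (k : Fin n) :
    iterSnd t (piW0 (coordQ k)) = 0 :=
  List.foldr_eq_zero_of_two_le_length _ (fun kb => (isPartialDeriv_sndDeriv kb).map_zero)
    (fun i j => (isPartialDeriv_sndDeriv i).apply_apply_piW0_coordQ (isPartialDeriv_sndDeriv j) k)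
    _ (by simpa using hr)

end iterDeriv

theorem moyalP_zero_left (r : ℕ) (b : W0 n) : moyalP r 0 b = 0 :=
  Finset.sum_eq_zero fun t _ => by rw [iterFst_zero, zero_mul, smul_zero]

theorem moyalP_zero_right (r : ℕ) (a : W0 n) : moyalP r a 0 = 0 :=
  Finset.sum_eq_zero fun t _ => by rw [iterSnd_zero, mul_zero, smul_zero]

theorem moyalP_zero (a b : W0 n) : moyalP 0 a b = a * b := by
  rw [moyalP, Fintype.sum_unique, Finset.prod_of_isEmpty, one_smul]
  rfl

theorem moyalP_one (a b : W0 n) :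
    moyalP 1 a b = ∑ kb : Fin n × Bool, pSign kb • (fstDeriv kb a * sndDeriv kb b) := by
  rw [moyalP]
  exact Fintype.sum_equiv (Equiv.funUnique (Fin 1) (Fin n × Bool)) _ _ fun t => by
    rw [Fin.prod_univ_one]
    rfl

theorem moyalP_piW0_piW0 {r : ℕ} (hr : r ≠ 0) (f g : Cinf n) : moyalP r (piW0 f) (piW0 g) = 0 := by
  obtain ⟨r, rfl⟩ := Nat.exists_eq_succ_of_ne_zero hr
  refine Finset.sum_eq_zero fun t _ => ?_
  obtain ⟨f', hf'⟩ := iterFst_piW0_mem_range (Fin.tail t) f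
  obtain ⟨g', hg'⟩ := iterSnd_piW0_mem_range (Fin.tail t) g
  rw [iterFst_succ, iterSnd_succ, ← hf', ← hg']
  rcases fstDeriv_eq_Dp_or_sndDeriv_eq_Dp (t 0) with h | h <;> simp [h, Dp_piW0]

theorem moyalP_one_piW0_coordQ_left (k : Fin n) (b : W0 n) :
    moyalP 1 (piW0 (coordQ k)) b = Dp k b := by
  simp [moyalP_one, Fintype.sum_prod_type, fstDeriv, sndDeriv, pSign, Dq_piW0, Dp_piW0,
    pderivQ_coordQ, apply_ite piW0]
  simp [piW0]

theorem moyalP_one_piW0_coordQ_right (k : Fin n) (a : W0 n) :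
    moyalP 1 a (piW0 (coordQ k)) = -Dp k a := by
  simp [moyalP_one, Fintype.sum_prod_type, fstDeriv, sndDeriv, pSign, Dq_piW0, Dp_piW0,
    pderivQ_coordQ, apply_ite piW0]
  simp [piW0]

theorem moyalP_piW0_coordQ_left {r : ℕ} (hr : 2 ≤ r) (k : Fin n) (b : W0 n) :
    moyalP r (piW0 (coordQ k)) b = 0 :=
  Finset.sum_eq_zero fun t _ => by rw [iterFst_piW0_coordQ hr, zero_mul, smul_zero]

theorem moyalP_piW0_coordQ_right {r : ℕ} (hr : 2 ≤ r) (k : Fin n) (a : W0 n) :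
    moyalP r a (piW0 (coordQ k)) = 0 :=
  Finset.sum_eq_zero fun t _ => by rw [iterSnd_piW0_coordQ hr, mul_zero, smul_zero]

theorem coeff_piHat (g : PowerSeries (Cinf n)) (ℓ : ℕ) :
    PowerSeries.coeff ℓ (piHat g) = piW0 (PowerSeries.coeff ℓ g) :=
  PowerSeries.coeff_map _ ℓ g

theorem coeff_weylMul_piW_left (f : Cinf n) (a : Wf n) (ℓ : ℕ) :
    PowerSeries.coeff ℓ (weylMul (piW f) a) =
      ∑ p ∈ Finset.HasAntidiagonal.antidiagonal ℓ,
        ((Complex.I / 2) ^ p.1 / (p.1.factorial : ℂ)) • moyalP p.1 (piW0 f) (PowerSeries.coeff p.2 a) := by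
  rw [weylMul, PowerSeries.coeff_mk]
  refine Finset.sum_congr rfl fun p _ => ?_
  rw [Finset.sum_eq_single (0, p.2)]
  · simp [piW]
  · rintro ⟨i, j⟩ hij hne
    have hi : i ≠ 0 := by rintro rfl; simp_all
    rw [piW, PowerSeries.coeff_C, if_neg hi, moyalP_zero_left, smul_zero]
  · simp

theorem coeff_weylMul_piW_right (f : Cinf n) (a : Wf n) (ℓ : ℕ) :
    PowerSeries.coeff ℓ (weylMul a (piW f)) =
      ∑ p ∈ Finset.HasAntidiagonal.antidiagonal ℓ,
        ((Complex.I / 2) ^ p.1 / (p.1.factorial : ℂ)) • moyalP p.1 (PowerSeries.coeff p.2 a) (piW0 f) := by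
  rw [weylMul, PowerSeries.coeff_mk]
  refine Finset.sum_congr rfl fun p _ => ?_
  rw [Finset.sum_eq_single (p.2, 0)]
  · simp [piW]
  · rintro ⟨i, j⟩ hij hne
    have hj : j ≠ 0 := by rintro rfl; simp_all
    rw [piW, PowerSeries.coeff_C, if_neg hj, moyalP_zero_right, smul_zero]
  · simp

theorem weylMul_piW_piHat_comm (f : Cinf n) (g : PowerSeries (Cinf n)) :
    weylMul (piW f) (piHat g) = weylMul (piHat g) (piW f) := by
  ext ℓ : 1
  rw [coeff_weylMul_piW_left, coeff_weylMul_piW_right]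
  refine Finset.sum_congr rfl fun p _ => ?_
  rw [coeff_piHat]
  rcases eq_or_ne p.1 0 with h | h
  · rw [h, moyalP_zero, moyalP_zero, mul_comm]
  · rw [moyalP_piW0_piW0 h, moyalP_piW0_piW0 h]

theorem coeff_succ_weylMul_piW_coordQ_left (k : Fin n) (a : Wf n) (ℓ : ℕ) :
    PowerSeries.coeff (ℓ + 1) (weylMul (piW (coordQ k)) a) =
      piW0 (coordQ k) * PowerSeries.coeff (ℓ + 1) a + (Complex.I / 2) • Dp k (PowerSeries.coeff ℓ a) := by
  rw [coeff_weylMul_piW_left, Finset.Nat.sum_antidiagonal_succ, Finset.sum_eq_single (0, ℓ)]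
  · simp [moyalP_zero, moyalP_one_piW0_coordQ_left]
  · rintro ⟨i, j⟩ _ hne
    have hi : i ≠ 0 := by rintro rfl; simp_all
    rw [moyalP_piW0_coordQ_left (by omega), smul_zero]
  · simp

theorem coeff_succ_weylMul_piW_coordQ_right (k : Fin n) (a : Wf n) (ℓ : ℕ) :
    PowerSeries.coeff (ℓ + 1) (weylMul a (piW (coordQ k))) =
      PowerSeries.coeff (ℓ + 1) a * piW0 (coordQ k) - (Complex.I / 2) • Dp k (PowerSeries.coeff ℓ a) := by
  rw [coeff_weylMul_piW_right, Finset.Nat.sum_antidiagonal_succ, Finset.sum_eq_single (0, ℓ)]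
  · simp [moyalP_zero, moyalP_one_piW0_coordQ_right, sub_eq_add_neg]
  · rintro ⟨i, j⟩ _ hne
    have hi : i ≠ 0 := by rintro rfl; simp_all
    rw [moyalP_piW0_coordQ_right (by omega), smul_zero]
  · simp

theorem Dp_coeff_eq_zero_of_weylMul_comm {k : Fin n} {a : Wf n}
    (h : weylMul (piW (coordQ k)) a = weylMul a (piW (coordQ k))) (ℓ : ℕ) :
    Dp k (PowerSeries.coeff ℓ a) = 0 := by
  have hℓ := congrArg (PowerSeries.coeff (ℓ + 1)) h
  rw [coeff_succ_weylMul_piW_coordQ_left, coeff_succ_weylMul_piW_coordQ_right, mul_comm] at hℓ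
  have hneg : (Complex.I / 2) • Dp k (PowerSeries.coeff ℓ a) =
      -((Complex.I / 2) • Dp k (PowerSeries.coeff ℓ a)) :=
    add_left_cancel (hℓ.trans (sub_eq_add_neg _ _))
  have hI : Complex.I • Dp k (PowerSeries.coeff ℓ a) = Complex.I • 0 := by
    rw [smul_zero, ← add_halves Complex.I, add_smul, ← sub_neg_eq_add, ← hneg, sub_self]
  exact (Complex.I_ne_zero.isUnit.smul_left_cancel).mp hI

theorem weylMul_piW_comm_iff (a : Wf n) :
    (∀ f : Cinf n, weylMul (piW f) a = weylMul a (piW f)) ↔ a ∈ Set.range piHat := by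
  refine ⟨fun h => ⟨PowerSeries.map MvPowerSeries.constantCoeff a, ?_⟩, ?_⟩
  · ext ℓ : 1
    rw [coeff_piHat, PowerSeries.coeff_map]
    exact (eq_piW0_constantCoeff_of_Dp_eq_zero fun k =>
      Dp_coeff_eq_zero_of_weylMul_comm (h (coordQ k)) ℓ).symm
  · rintro ⟨g, rfl⟩ f
    exact weylMul_piW_piHat_comm f g

theorem map_constantCoeff_piHat (g : PowerSeries (Cinf n)) :
    PowerSeries.map MvPowerSeries.constantCoeff (piHat g) = g := by
  ext ℓ : 1
  rw [PowerSeries.coeff_map, coeff_piHat, piW0, MvPowerSeries.constantCoeff_C]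

theorem lamSmulW_piHat (s : PowerSeries ℂ) (g : PowerSeries (Cinf n)) :
    lamSmulW s (piHat g) = piHat (lamSmulS s g) := by
  have hs : PowerSeries.map (algebraMap ℂ (W0 n)) s =
      piHat (PowerSeries.map (algebraMap ℂ (Cinf n)) s) := by
    ext ℓ : 1
    rw [PowerSeries.coeff_map, coeff_piHat, PowerSeries.coeff_map, piW0]
    exact MvPowerSeries.algebraMap_apply
  rw [lamSmulW, lamSmulS, hs, piHat, piHat, piHat, map_mul]

/-- The zeroth differential Hochschild cohomology
`HH⁰(C^∞(ℝⁿ,ℂ), W)`, i.e. the set of `a ∈ W` with `π*(f) ⋆_W a = a ⋆_W π*(f)` for all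
`f`, is isomorphic to `C^∞(ℝⁿ,ℂ)[[λ]]` as a `ℂ[[λ]]`-module. -/
theorem hochschild_HH0_iso (n : ℕ) :
    ∃ e : {a : Wf n // ∀ f : Cinf n, weylMul (piW f) a = weylMul a (piW f)} ≃
          PowerSeries (Cinf n),
      (∀ a b : {a : Wf n // ∀ f : Cinf n, weylMul (piW f) a = weylMul a (piW f)},
        ∃ c : {a : Wf n // ∀ f : Cinf n, weylMul (piW f) a = weylMul a (piW f)},
          (c : Wf n) = (a : Wf n) + (b : Wf n)) ∧
      (∀ (s : PowerSeries ℂ)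
          (a : {a : Wf n // ∀ f : Cinf n, weylMul (piW f) a = weylMul a (piW f)}),
        ∃ b : {a : Wf n // ∀ f : Cinf n, weylMul (piW f) a = weylMul a (piW f)},
          (b : Wf n) = lamSmulW s (a : Wf n)) ∧
      (∀ a b c : {a : Wf n // ∀ f : Cinf n, weylMul (piW f) a = weylMul a (piW f)},
        (c : Wf n) = (a : Wf n) + (b : Wf n) → e c = e a + e b) ∧
      (∀ (s : PowerSeries ℂ)
          (a b : {a : Wf n // ∀ f : Cinf n, weylMul (piW f) a = weylMul a (piW f)}),
        (b : Wf n) = lamSmulW s (a : Wf n) → e b = lamSmulS s (e a)) := by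
  refine ⟨{ toFun := fun a => PowerSeries.map MvPowerSeries.constantCoeff a.1
            invFun := fun g => ⟨piHat g, (weylMul_piW_comm_iff _).2 ⟨g, rfl⟩⟩
            left_inv := ?_
            right_inv := map_constantCoeff_piHat }, ?_, ?_, ?_, ?_⟩
  · rintro ⟨a, ha⟩
    obtain ⟨g, rfl⟩ := (weylMul_piW_comm_iff a).1 ha
    simp only [map_constantCoeff_piHat]
  · rintro ⟨a, ha⟩ ⟨b, hb⟩
    obtain ⟨g, rfl⟩ := (weylMul_piW_comm_iff a).1 ha
    obtain ⟨g', rfl⟩ := (weylMul_piW_comm_iff b).1 hb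
    exact ⟨⟨_, (weylMul_piW_comm_iff _).2 ⟨g + g', map_add _ g g'⟩⟩, rfl⟩
  · rintro s ⟨a, ha⟩
    obtain ⟨g, rfl⟩ := (weylMul_piW_comm_iff a).1 ha
    exact ⟨⟨_, (weylMul_piW_comm_iff _).2 ⟨lamSmulS s g, (lamSmulW_piHat s g).symm⟩⟩, rfl⟩
  · intro a b c h
    exact (congrArg _ h).trans (map_add (PowerSeries.map MvPowerSeries.constantCoeff) _ _)
  · rintro s ⟨a, ha⟩ ⟨b, hb⟩ (rfl : b = _)
    obtain ⟨g, rfl⟩ := (weylMul_piW_comm_iff a).1 ha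
    simp only [Equiv.coe_fn_mk, lamSmulW_piHat, map_constantCoeff_piHat]
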